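/- Let n ≥ 1, x > 0, 0 ≤ m < n, and let y, z ≥ 0 satisfy y + z = x. Let v* = v_y + v_z ∈ ℝⁿ be any duo-equidistant vector in Γ(m, y, z), set v = m·y + (m+1)·z (the total mass of v*), and let Δ_Z = ⌊(n+1)/(m+2)⌋. Then for every j with 1 ≤ j ≤ Δ_Z: f_j(v*) = (n + 1 − j)·x − j·v; in particular every window of j consecutive coordinates of v* has sum at most x. -/

import Mathlib

open Finset

/-!
Each of the two layers `v_y`, `v_z` puts its mass on marks that are at least `Δ_Z ≥ j` apart,
and at least `Δ_Z` away from the virtual endpoints `0` and `n + 1` where the partial sums of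
the gaps start and end. Hence a window of `j` consecutive coordinates meets at most one mark of
each layer, so its sum is at most `y + z = x` and every positive part in `f_j` is the deficit
itself. Summing the deficits, each mark lies in exactly `j` windows, which gives `j · v`.
-/

/-- `f_j v = Σ_{l=1}^{n+1−j} (x − Σ_{i=0}^{j−1} v_{l+i})⁺`, the sum of positive parts of
the deficits of all length-`j` windows of consecutive coordinates (`l` is 0-indexed here). -/
noncomputable def fj (n : ℕ) (x : ℝ) (j : ℕ) (v : Fin n → ℝ) : ℝ :=
  ∑ l ∈ Finset.range (n + 1 - j),
    max (x - ∑ i ∈ Finset.range j, if h : l + i < n then v ⟨l + i, h⟩ else 0) 0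

/-- A duo-equidistant vector `v = v_y + v_z ∈ Γ(m, y, z)`: `v_y` places mass `y` at the `m`
partial sums `Σ_{k=1}^{j} Δ_{y,k}` (`1 ≤ j ≤ m`) of positive integers
`Δ_{y,1},…,Δ_{y,m+1} ∈ {Δ_Y, Δ_Y+1}` (`Δ_Y = ⌊(n+1)/(m+1)⌋`) summing to `n+1`, and `v_z`
places mass `z` at the `m+1` partial sums `Σ_{k=1}^{j} Δ_{z,k}` (`1 ≤ j ≤ m+1`) of positive
integers `Δ_{z,1},…,Δ_{z,m+2} ∈ {Δ_Z, Δ_Z+1}` (`Δ_Z = ⌊(n+1)/(m+2)⌋`) summing to `n+1`.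
Indices of `v` are 1-based in this description (`Fin n` is 0-based, whence the `+ 1`). -/
def IsDuoEquidistant (n m : ℕ) (y z : ℝ) (v : Fin n → ℝ) : Prop :=
  ∃ vy vz : Fin n → ℝ, ∃ Δy Δz : ℕ → ℕ,
    v = vy + vz ∧
    (∀ k ∈ Finset.Icc 1 (m + 1), 0 < Δy k) ∧
    (∀ k ∈ Finset.Icc 1 (m + 1),
      Δy k = (n + 1) / (m + 1) ∨ Δy k = (n + 1) / (m + 1) + 1) ∧
    (∑ k ∈ Finset.Icc 1 (m + 1), Δy k = n + 1) ∧
    (∀ k ∈ Finset.Icc 1 (m + 2), 0 < Δz k) ∧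
    (∀ k ∈ Finset.Icc 1 (m + 2),
      Δz k = (n + 1) / (m + 2) ∨ Δz k = (n + 1) / (m + 2) + 1) ∧
    (∑ k ∈ Finset.Icc 1 (m + 2), Δz k = n + 1) ∧
    (∀ i : Fin n,
      ((∃ j, 1 ≤ j ∧ j ≤ m ∧ (i : ℕ) + 1 = ∑ k ∈ Finset.Icc 1 j, Δy k) → vy i = y) ∧
      (¬ (∃ j, 1 ≤ j ∧ j ≤ m ∧ (i : ℕ) + 1 = ∑ k ∈ Finset.Icc 1 j, Δy k) → vy i = 0)) ∧
    (∀ i : Fin n,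
      ((∃ j, 1 ≤ j ∧ j ≤ m + 1 ∧ (i : ℕ) + 1 = ∑ k ∈ Finset.Icc 1 j, Δz k) → vz i = z) ∧
      (¬ (∃ j, 1 ≤ j ∧ j ≤ m + 1 ∧ (i : ℕ) + 1 = ∑ k ∈ Finset.Icc 1 j, Δz k) → vz i = 0))

namespace DuoEquidistant

/-- Marks at distance at least `d` from each other and from the virtual endpoints `-1`
and `n`. -/
structure IsSpaced (n d : ℕ) (P : Finset ℕ) : Prop where
  le_add_one : ∀ p ∈ P, d ≤ p + 1
  add_le : ∀ p ∈ P, p + d ≤ n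
  add_le_of_lt : ∀ p ∈ P, ∀ q ∈ P, p < q → p + d ≤ q

theorem card_filter_mem_Ico {n j p : ℕ} (h₁ : j ≤ p + 1) (h₂ : p + j ≤ n) :
    #{l ∈ range (n + 1 - j) | p ∈ Ico l (l + j)} = j := by
  have : {l ∈ range (n + 1 - j) | p ∈ Ico l (l + j)} = Ico (p + 1 - j) (p + 1) := by
    ext l
    simp only [mem_filter, mem_range, mem_Ico]
    omega
  rw [this, Nat.card_Ico]
  omega

namespace IsSpaced

variable {n d j : ℕ} {P : Finset ℕ}

theorem card_inter_Ico_le_one (hP : IsSpaced n d P) (hj : j ≤ d) (l : ℕ) :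
    #(Ico l (l + j) ∩ P) ≤ 1 := by
  refine card_le_one.2 fun p hp q hq => ?_
  simp only [mem_inter, mem_Ico] at hp hq
  rcases lt_trichotomy p q with h | h | h
  · have := hP.add_le_of_lt p hp.2 q hq.2 h
    omega
  · exact h
  · have := hP.add_le_of_lt q hq.2 p hp.2 h
    omega

theorem sum_Ico_ite_le (hP : IsSpaced n d P) (hj : j ≤ d) {a : ℝ} (ha : 0 ≤ a) (l : ℕ) :
    ∑ p ∈ Ico l (l + j), (if p ∈ P then a else 0) ≤ a := by
  rw [sum_ite_mem, sum_const, nsmul_eq_mul]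
  exact mul_le_of_le_one_left ha (by exact_mod_cast hP.card_inter_Ico_le_one hj l)

theorem sum_range_sum_Ico_ite (hP : IsSpaced n d P) (hj : j ≤ d) (a : ℝ) :
    ∑ l ∈ range (n + 1 - j), ∑ p ∈ Ico l (l + j), (if p ∈ P then a else 0)
      = j * (#P * a) := by
  calc ∑ l ∈ range (n + 1 - j), ∑ p ∈ Ico l (l + j), (if p ∈ P then a else 0)
      = ∑ l ∈ range (n + 1 - j), ∑ p ∈ P, (if p ∈ Ico l (l + j) then a else 0) := by
        refine sum_congr rfl fun l _ => ?_
        rw [sum_ite_mem, sum_ite_mem, inter_comm]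
    _ = ∑ p ∈ P, ∑ l ∈ range (n + 1 - j), (if p ∈ Ico l (l + j) then a else 0) := sum_comm
    _ = ∑ p ∈ P, (j : ℝ) * a := by
        refine sum_congr rfl fun p hp => ?_
        rw [← sum_filter, sum_const, nsmul_eq_mul,
          card_filter_mem_Ico ((hP.le_add_one p hp).trans' hj) ((hP.add_le p hp).trans' (by omega))]
    _ = j * (#P * a) := by
        rw [sum_const, nsmul_eq_mul]
        ring

end IsSpaced

section PartialSums

variable {Δ : ℕ → ℕ} {c d : ℕ}

def partialSum (Δ : ℕ → ℕ) (k : ℕ) : ℕ := ∑ i ∈ Icc 1 k, Δ i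

theorem partialSum_zero : partialSum Δ 0 = 0 := by
  simp [partialSum]

theorem partialSum_succ (k : ℕ) : partialSum Δ (k + 1) = partialSum Δ k + Δ (k + 1) :=
  sum_Icc_succ_top (by omega) Δ

theorem partialSum_mono : Monotone (partialSum Δ) := fun _ _ h =>
  sum_le_sum_of_subset (Icc_subset_Icc_right h)

theorem partialSum_add_le (hΔ : ∀ k ∈ Icc 1 c, d ≤ Δ k) {k₁ k₂ : ℕ} (h : k₁ < k₂)
    (h₂ : k₂ ≤ c) : partialSum Δ k₁ + d ≤ partialSum Δ k₂ := by
  induction k₂, h using Nat.le_induction with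
  | base =>
    rw [partialSum_succ]
    have := hΔ (k₁ + 1) (mem_Icc.2 ⟨by omega, h₂⟩)
    omega
  | succ k hk ih =>
    rw [partialSum_succ]
    have := ih (by omega)
    omega

/-- The marks of a layer, shifted by one to be `0`-based. -/
def marks (Δ : ℕ → ℕ) (c : ℕ) : Finset ℕ := (Icc 1 c).image fun k => partialSum Δ k - 1

theorem mem_marks (hΔ : ∀ k ∈ Icc 1 c, 0 < Δ k) {p : ℕ} :
    p ∈ marks Δ c ↔ ∃ k, 1 ≤ k ∧ k ≤ c ∧ p + 1 = partialSum Δ k := by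
  simp only [marks, mem_image, mem_Icc]
  constructor
  · rintro ⟨k, ⟨hk₁, hk₂⟩, rfl⟩
    have := partialSum_add_le hΔ (k₁ := 0) hk₁ hk₂
    rw [partialSum_zero] at this
    exact ⟨k, hk₁, hk₂, by omega⟩
  · rintro ⟨k, hk₁, hk₂, hp⟩
    exact ⟨k, ⟨hk₁, hk₂⟩, by omega⟩

theorem card_marks (hΔ : ∀ k ∈ Icc 1 c, 0 < Δ k) : #(marks Δ c) = c := by
  rw [marks, card_image_of_injOn, Nat.card_Icc, Nat.add_sub_cancel]
  intro k₁ hk₁ k₂ hk₂ heq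
  simp only [coe_Icc, Set.mem_Icc] at hk₁ hk₂ heq
  have pos₁ := partialSum_add_le hΔ (k₁ := 0) hk₁.1 hk₁.2
  have pos₂ := partialSum_add_le hΔ (k₁ := 0) hk₂.1 hk₂.2
  rw [partialSum_zero] at pos₁ pos₂
  rcases lt_trichotomy k₁ k₂ with h | h | h
  · have := partialSum_add_le hΔ h hk₂.2
    omega
  · exact h
  · have := partialSum_add_le hΔ h hk₁.2
    omega

theorem isSpaced_marks {n : ℕ} (hΔ : ∀ k ∈ Icc 1 (c + 1), d ≤ Δ k)
    (hsum : partialSum Δ (c + 1) = n + 1) : IsSpaced n d (marks Δ c) := by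
  have bounds : ∀ k ∈ Icc 1 c, d ≤ partialSum Δ k ∧ partialSum Δ k + d ≤ n + 1 := by
    intro k hk
    rw [mem_Icc] at hk
    have h₁ := partialSum_add_le hΔ (k₁ := 0) hk.1 (by omega)
    have h₂ := partialSum_add_le hΔ (k₁ := k) (k₂ := c + 1) (by omega) le_rfl
    rw [partialSum_zero] at h₁
    omega
  refine ⟨?_, ?_, ?_⟩ <;> simp only [marks, mem_image]
  · rintro _ ⟨k, hk, rfl⟩
    have := bounds k hk
    omega
  · rintro _ ⟨k, hk, rfl⟩
    have := bounds k hk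
    omega
  · rintro _ ⟨k₁, hk₁, rfl⟩ _ ⟨k₂, hk₂, rfl⟩ hlt
    have := bounds k₁ hk₁
    rcases lt_or_ge k₁ k₂ with h | h
    · have := partialSum_add_le hΔ h (by rw [mem_Icc] at hk₂; omega)
      omega
    · have := partialSum_mono (Δ := Δ) h
      omega

theorem eq_ite_mem_marks {n : ℕ} (hΔ : ∀ k ∈ Icc 1 c, 0 < Δ k) {a : ℝ} {w : Fin n → ℝ}
    (hw : ∀ i : Fin n,
      ((∃ k, 1 ≤ k ∧ k ≤ c ∧ (i : ℕ) + 1 = partialSum Δ k) → w i = a) ∧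
      (¬ (∃ k, 1 ≤ k ∧ k ≤ c ∧ (i : ℕ) + 1 = partialSum Δ k) → w i = 0))
    (i : Fin n) : w i = if (i : ℕ) ∈ marks Δ c then a else 0 := by
  by_cases h : ∃ k, 1 ≤ k ∧ k ≤ c ∧ (i : ℕ) + 1 = partialSum Δ k
  · rw [if_pos ((mem_marks hΔ).2 h), (hw i).1 h]
  · rw [if_neg (mt (mem_marks hΔ).1 h), (hw i).2 h]

end PartialSums

noncomputable def windowSum {n : ℕ} (w : Fin n → ℝ) (l j : ℕ) : ℝ :=
  ∑ i ∈ range j, if h : l + i < n then w ⟨l + i, h⟩ else 0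

theorem windowSum_eq_sum_Ico {n l j : ℕ} {w : Fin n → ℝ} {g : ℕ → ℝ}
    (hg : ∀ i : Fin n, w i = g i) (hl : l + j ≤ n) :
    windowSum w l j = ∑ p ∈ Ico l (l + j), g p := by
  rw [windowSum, sum_Ico_eq_sum_range, add_tsub_cancel_left]
  refine sum_congr rfl fun i hi => ?_
  rw [mem_range] at hi
  rw [dif_pos (by omega), hg]

theorem fj_eq_sub_sum_windowSum {n j : ℕ} {x : ℝ} {w : Fin n → ℝ} (hj : j ≤ n + 1)
    (hle : ∀ l ∈ range (n + 1 - j), windowSum w l j ≤ x) :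
    fj n x j w = ((n : ℝ) + 1 - j) * x - ∑ l ∈ range (n + 1 - j), windowSum w l j := by
  calc fj n x j w = ∑ l ∈ range (n + 1 - j), (x - windowSum w l j) :=
        sum_congr rfl fun l hl => max_eq_left (sub_nonneg.2 (hle l hl))
    _ = ((n : ℝ) + 1 - j) * x - ∑ l ∈ range (n + 1 - j), windowSum w l j := by
        rw [sum_sub_distrib, sum_const, card_range, nsmul_eq_mul, Nat.cast_sub hj]
        push_cast
        ring

end DuoEquidistant

open DuoEquidistant

theorem statement16_general (n m : ℕ) (x y z : ℝ)
    (hy : 0 ≤ y) (hz : 0 ≤ z) (hyz : y + z = x)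
    (vstar : Fin n → ℝ) (hv : IsDuoEquidistant n m y z vstar)
    (v : ℝ) (hvmass : v = (m : ℝ) * y + ((m : ℝ) + 1) * z)
    (j : ℕ) (hj2 : j ≤ (n + 1) / (m + 2)) :
    fj n x j vstar = ((n : ℝ) + 1 - j) * x - (j : ℝ) * v ∧
    ∀ l ∈ Finset.range (n + 1 - j),
      (∑ i ∈ Finset.range j, if h : l + i < n then vstar ⟨l + i, h⟩ else 0) ≤ x := by
  obtain ⟨vy, vz, Δy, Δz, rfl, hΔy₀, hΔy, hsumy, hΔz₀, hΔz, hsumz, hvy, hvz⟩ := hv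
  have hjy : ∀ k ∈ Icc 1 (m + 1), j ≤ Δy k := fun k hk => by
    have := Nat.div_le_div_left (a := n + 1) (show m + 1 ≤ m + 2 by omega) (by omega)
    rcases hΔy k hk with h | h <;> omega
  have hjz : ∀ k ∈ Icc 1 (m + 2), j ≤ Δz k := fun k hk => by
    rcases hΔz k hk with h | h <;> omega
  have hposy : ∀ k ∈ Icc 1 m, 0 < Δy k := fun k hk =>
    hΔy₀ k (Icc_subset_Icc_right m.le_succ hk)
  have hposz : ∀ k ∈ Icc 1 (m + 1), 0 < Δz k := fun k hk =>
    hΔz₀ k (Icc_subset_Icc_right (m + 1).le_succ hk)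
  have hPy := isSpaced_marks hjy hsumy
  have hPz := isSpaced_marks (c := m + 1) hjz hsumz
  have hwindow : ∀ l ∈ range (n + 1 - j), windowSum (vy + vz) l j =
      ∑ p ∈ Ico l (l + j), (if p ∈ marks Δy m then y else 0) +
        ∑ p ∈ Ico l (l + j), (if p ∈ marks Δz (m + 1) then z else 0) := fun l hl => by
    rw [← sum_add_distrib]
    refine windowSum_eq_sum_Ico (fun i => ?_) (by rw [mem_range] at hl; omega)
    rw [Pi.add_apply, eq_ite_mem_marks hposy hvy, eq_ite_mem_marks hposz hvz]
  have hle : ∀ l ∈ range (n + 1 - j), windowSum (vy + vz) l j ≤ x := fun l hl => by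
    rw [hwindow l hl, ← hyz]
    exact add_le_add (hPy.sum_Ico_ite_le le_rfl hy l) (hPz.sum_Ico_ite_le le_rfl hz l)
  refine ⟨?_, hle⟩
  rw [fj_eq_sub_sum_windowSum (hj2.trans (Nat.div_le_self _ _)) hle, sum_congr rfl hwindow, sum_add_distrib,
    hPy.sum_range_sum_Ico_ite le_rfl, hPz.sum_range_sum_Ico_ite le_rfl, card_marks hposy,
    card_marks hposz, hvmass]
  push_cast
  ring

/-- For a duo-equidistant vector in `Γ(m, y, z)` with `y + z = x`, total mass
`v = m·y + (m+1)·z`, and `1 ≤ j ≤ Δ_Z`, `f_j(v*) = (n+1−j)·x − j·v`; in particular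
every window of `j` consecutive coordinates has sum at most `x`. -/
theorem statement16 (n m : ℕ) (hn : 1 ≤ n) (hm : m < n) (x y z : ℝ) (hx : 0 < x)
    (hy : 0 ≤ y) (hz : 0 ≤ z) (hyz : y + z = x)
    (vstar : Fin n → ℝ) (hv : IsDuoEquidistant n m y z vstar)
    (v : ℝ) (hvmass : v = (m : ℝ) * y + ((m : ℝ) + 1) * z)
    (j : ℕ) (hj1 : 1 ≤ j) (hj2 : j ≤ (n + 1) / (m + 2)) :
    fj n x j vstar = ((n : ℝ) + 1 - j) * x - (j : ℝ) * v ∧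
    ∀ l ∈ Finset.range (n + 1 - j),
      (∑ i ∈ Finset.range j, if h : l + i < n then vstar ⟨l + i, h⟩ else 0) ≤ x :=
  statement16_general n m x y z hy hz hyz vstar hv v hvmass j hj2
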